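/- The Riccati update preserves positive semidefiniteness: if F is symmetric positive semidefinite, Q is symmetric positive semidefinite, and R is symmetric positive definite, then F' := Q + AᵀFA - AᵀFB(R + BᵀFB)⁻¹BᵀFA is symmetric positive semidefinite. -/

import Mathlib

/-!
The gain term is a Schur complement: `F - F B (R + Bᴴ F B)⁻¹ Bᴴ F` is the Schur complement of the
positive definite block `R + Bᴴ F B` in the block matrix `[1 B]ᴴ F [1 B] + diag(0, R) ⪰ 0`, hence
positive semidefinite, and the Riccati update is `Q` plus its congruence by `A`.
-/

open Matrix

namespace Matrix

variable {𝕜 m n : Type*} [Fintype m] [Fintype n] [DecidableEq m] [DecidableEq n]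
  [Field 𝕜] [PartialOrder 𝕜] [StarRing 𝕜] [StarOrderedRing 𝕜]

theorem PosSemidef.fromBlocks_mul_add_conjTranspose_mul_mul {F : Matrix n n 𝕜}
    {R : Matrix m m 𝕜} (hF : F.PosSemidef) (hR : R.PosSemidef) (B : Matrix n m 𝕜) :
    (fromBlocks F (F * B) (Bᴴ * F) (R + Bᴴ * F * B)).PosSemidef := by
  have hF' := hF.conjTranspose_mul_mul_same (fromCols (1 : Matrix n n 𝕜) B)
  have hR' := hR.conjTranspose_mul_mul_same (fromCols (0 : Matrix m n 𝕜) (1 : Matrix m m 𝕜))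
  convert hR'.add hF' using 1
  simp only [conjTranspose_fromCols_eq_fromRows_conjTranspose, fromRows_mul, mul_fromCols,
    fromCols_fromRows_eq_fromBlocks, fromBlocks_add]
  simp [Matrix.mul_assoc]

theorem PosSemidef.sub_mul_inv_conjTranspose_mul {F : Matrix n n 𝕜} {R : Matrix m m 𝕜}
    (hF : F.PosSemidef) (hR : R.PosDef) (B : Matrix n m 𝕜) :
    (F - F * B * (R + Bᴴ * F * B)⁻¹ * Bᴴ * F).PosSemidef := by
  have hS : (R + Bᴴ * F * B).PosDef := hR.add_posSemidef (hF.conjTranspose_mul_mul_same B)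
  have := hS.isUnit.invertible
  have hSchur := (PosDef.fromBlocks₂₂ F (F * B) hS).mp
  rw [conjTranspose_mul, hF.isHermitian.eq] at hSchur
  simpa [Matrix.mul_assoc] using
    hSchur (hF.fromBlocks_mul_add_conjTranspose_mul_mul hR.posSemidef B)

end Matrix

theorem riccati_update_posSemidef
    {n m : ℕ}
    (A : Matrix (Fin n) (Fin n) ℝ) (B : Matrix (Fin n) (Fin m) ℝ)
    (Q F : Matrix (Fin n) (Fin n) ℝ) (hQ : Q.PosSemidef) (hF : F.PosSemidef)
    (R : Matrix (Fin m) (Fin m) ℝ) (hR : R.PosDef) :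
    (Q + Aᵀ * F * A - Aᵀ * F * B * (R + Bᵀ * F * B)⁻¹ * Bᵀ * F * A).PosSemidef := by
  have hGain := (hF.sub_mul_inv_conjTranspose_mul hR B).conjTranspose_mul_mul_same A
  convert hQ.add hGain using 1
  simp only [conjTranspose_eq_transpose_of_trivial, Matrix.mul_sub, Matrix.sub_mul,
    Matrix.mul_assoc]
  abel
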